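/- arXiv:2406.17214 — 4 statements merged into one kernel-verified Lean document; each statement's English description precedes it below -/
import Mathlib

section
/- Let A be a real symmetric n×n matrix and B a principal m×m submatrix of A. Order the eigenvalues of A as λ_1 ≤ ... ≤ λ_n and pad the ordered eigenvalues μ of B to the left, indexing them μ_{n-m+1} ≤ ... ≤ μ_n. Then μ_k ≤ λ_k for all n-m+1 ≤ k ≤ n. -/
open Matrix


lemma aux_quad {n : ℕ} (U : Matrix (Fin n) (Fin n) ℝ) (hU : Uᵀ * U = 1)
    (lam : Fin n → ℝ) (c : Fin n → ℝ) :
    (U.mulVec c) ⬝ᵥ ((U * Matrix.diagonal lam * Uᵀ).mulVec (U.mulVec c)) =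
      ∑ i, lam i * c i ^ 2 ∧ (U.mulVec c) ⬝ᵥ (U.mulVec c) = ∑ i, c i ^ 2 := by
  have h1 : ∀ (M : Matrix (Fin n) (Fin n) ℝ),
      (U.mulVec c) ⬝ᵥ (M.mulVec (U.mulVec c)) = c ⬝ᵥ ((Uᵀ * M * U).mulVec c) := by
    intro M
    rw [Matrix.dotProduct_mulVec, Matrix.dotProduct_mulVec, Matrix.vecMul_mulVec,
      Matrix.vecMul_vecMul, ← Matrix.dotProduct_mulVec, Matrix.mul_assoc]
  constructor
  · rw [h1]
    have h2 : Uᵀ * (U * Matrix.diagonal lam * Uᵀ) * U = Matrix.diagonal lam := by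
      rw [← Matrix.mul_assoc, ← Matrix.mul_assoc, hU, Matrix.one_mul, Matrix.mul_assoc, hU,
        Matrix.mul_one]
    rw [h2]
    simp only [dotProduct, Matrix.mulVec_diagonal]
    exact Finset.sum_congr rfl fun i _ => by ring
  · have h3 := h1 1
    rw [Matrix.mul_one, hU] at h3
    simp only [Matrix.one_mulVec] at h3
    rw [h3]
    simp only [dotProduct]
    exact Finset.sum_congr rfl fun i _ => by ring

def extSub {N : ℕ} (p : Fin N → Prop) [DecidablePred p] : ({i : Fin N // p i} → ℝ) →ₗ[ℝ] (Fin N → ℝ) where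
  toFun c := fun j => if h : p j then c ⟨j, h⟩ else 0
  map_add' c d := by funext j; by_cases h : p j <;> simp [h]
  map_smul' r c := by funext j; by_cases h : p j <;> simp [h]

lemma extSub_inj {N : ℕ} (p : Fin N → Prop) [DecidablePred p] :
    Function.Injective (extSub p) := by
  intro c d h
  funext i
  have := congrFun h i.val
  simpa [extSub, i.2, Fin.eta] using this

noncomputable def extInj {m n : ℕ} (f : Fin m → Fin n) (hf : Function.Injective f) :
    (Fin m → ℝ) →ₗ[ℝ] (Fin n → ℝ) where
  toFun y := fun j => if h : ∃ i, f i = j then y h.choose else 0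
  map_add' c d := by funext j; by_cases h : ∃ i, f i = j <;> simp [h]
  map_smul' r c := by funext j; by_cases h : ∃ i, f i = j <;> simp [h]

lemma extInj_apply {m n : ℕ} (f : Fin m → Fin n) (hf : Function.Injective f)
    (y : Fin m → ℝ) (i : Fin m) : extInj f hf y (f i) = y i := by
  have h : ∃ i', f i' = f i := ⟨i, rfl⟩
  simp only [extInj, LinearMap.coe_mk, AddHom.coe_mk, dif_pos h]
  exact congrArg y (hf h.choose_spec)

lemma extInj_zero {m n : ℕ} (f : Fin m → Fin n) (hf : Function.Injective f)
    (y : Fin m → ℝ) (j : Fin n) (hj : ¬ ∃ i, f i = j) : extInj f hf y j = 0 := by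
  simp only [extInj, LinearMap.coe_mk, AddHom.coe_mk, dif_neg hj]

lemma extInj_inj {m n : ℕ} (f : Fin m → Fin n) (hf : Function.Injective f) :
    Function.Injective (extInj f hf) := by
  intro c d h
  funext i
  have := congrFun h (f i)
  rwa [extInj_apply, extInj_apply] at this

lemma sum_range_eq {m n : ℕ} (f : Fin m → Fin n) (hf : Function.Injective f)
    (g : Fin n → ℝ) (hg : ∀ j, (¬ ∃ i, f i = j) → g j = 0) :
    ∑ j, g j = ∑ i, g (f i) := by
  have h1 : ∑ i, g (f i) = ∑ j ∈ Finset.image f Finset.univ, g j :=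
    (Finset.sum_image (fun i _ j _ h => hf h)).symm
  rw [h1]
  refine (Finset.sum_subset (Finset.subset_univ _) fun j _ hj => hg j ?_).symm
  simp only [Finset.mem_image, Finset.mem_univ, true_and] at hj
  exact hj

lemma extInj_quad {m n : ℕ} (f : Fin m → Fin n) (hf : Function.Injective f)
    (A : Matrix (Fin n) (Fin n) ℝ) (y : Fin m → ℝ) :
    (extInj f hf y) ⬝ᵥ (A.mulVec (extInj f hf y)) = y ⬝ᵥ ((A.submatrix f f).mulVec y) ∧
      (extInj f hf y) ⬝ᵥ (extInj f hf y) = y ⬝ᵥ y := by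
  constructor
  · simp only [dotProduct, Matrix.mulVec, Matrix.submatrix_apply]
    rw [sum_range_eq f hf _ (fun j hj => by rw [extInj_zero f hf y j hj, zero_mul])]
    refine Finset.sum_congr rfl fun i _ => ?_
    rw [extInj_apply]
    congr 1
    rw [sum_range_eq f hf _ (fun j hj => by rw [extInj_zero f hf y j hj, mul_zero])]
    exact Finset.sum_congr rfl fun i' _ => by rw [extInj_apply]
  · simp only [dotProduct]
    rw [sum_range_eq f hf _ (fun j hj => by rw [extInj_zero f hf y j hj, zero_mul])]
    exact Finset.sum_congr rfl fun i _ => by rw [extInj_apply]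


lemma mulVec_injective_of_t {N : ℕ} (U : Matrix (Fin N) (Fin N) ℝ) (hU : Uᵀ * U = 1) :
    Function.Injective U.mulVec := by
  intro a b h
  have h2 := congrArg (Uᵀ.mulVec) h
  rwa [Matrix.mulVec_mulVec, Matrix.mulVec_mulVec, hU, Matrix.one_mulVec,
    Matrix.one_mulVec] at h2

lemma card_le_subtype (N K : ℕ) (h : K < N) :
    Fintype.card {i : Fin N // i.val ≤ K} = K + 1 := by
  rw [Fintype.card_congr
    (⟨fun i => (⟨i.1.val, by have := i.2; omega⟩ : Fin (K + 1)),
      fun j => ⟨⟨j.val, by have := j.isLt; omega⟩, by exact Nat.lt_succ_iff.mp j.isLt⟩,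
      fun i => Subtype.ext (Fin.ext rfl), fun j => Fin.ext rfl⟩ :
      {i : Fin N // i.val ≤ K} ≃ Fin (K + 1)), Fintype.card_fin]

lemma card_ge_subtype (M k : ℕ) (h : k < M) :
    Fintype.card {i : Fin M // k ≤ i.val} = M - k := by
  rw [Fintype.card_congr
    (⟨fun i => (⟨i.1.val - k, by have := i.2; have := i.1.isLt; omega⟩ : Fin (M - k)),
      fun j => ⟨⟨j.val + k, by have := j.isLt; omega⟩, by exact Nat.le_add_left k j.val⟩,
      fun i => Subtype.ext (Fin.ext (by have := i.2; simp; omega)),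
      fun j => Fin.ext (by simp)⟩ :
      {i : Fin M // k ≤ i.val} ≃ Fin (M - k)), Fintype.card_fin]

/-- `lam` is the list of eigenvalues of `A` counted with multiplicity, realized by an
orthogonal diagonalization. -/
def IsOrthoDiag {n : ℕ} (A : Matrix (Fin n) (Fin n) ℝ) (lam : Fin n → ℝ) : Prop :=
  ∃ U : Matrix (Fin n) (Fin n) ℝ, U * Uᵀ = 1 ∧ A = U * Matrix.diagonal lam * Uᵀ

/-- Left Padded Monotonicity: if `B` is a principal `m × m` submatrix of a real symmetric
`n × n` matrix `A`, with eigenvalues `lam` of `A` and `mu` of `B` in nondecreasing order,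
then `μ_k ≤ λ_k` when the eigenvalues of `B` are padded left, i.e. `mu` is indexed by
`n - m + 1, …, n`. -/
theorem left_padded_monotonicity (n m : ℕ) (hm : m ≤ n)
    (A : Matrix (Fin n) (Fin n) ℝ) (hA : A.IsSymm)
    (f : Fin m → Fin n) (hf : StrictMono f)
    (lam : Fin n → ℝ) (mu : Fin m → ℝ)
    (hlam : Monotone lam) (hmu : Monotone mu)
    (hAdiag : IsOrthoDiag A lam) (hBdiag : IsOrthoDiag (A.submatrix f f) mu) :
    ∀ k : Fin m, mu k ≤ lam ⟨n - m + k, by omega⟩ := by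
  intro k
  obtain ⟨U, hU, hAeq⟩ := hAdiag
  obtain ⟨V, hV, hBeq⟩ := hBdiag
  have hUt : Uᵀ * U = 1 := mul_eq_one_comm.mp hU
  have hVt : Vᵀ * V = 1 := mul_eq_one_comm.mp hV
  have hfi : Function.Injective f := hf.injective
  have hk : (k : ℕ) < m := k.isLt
  set K : ℕ := n - m + k.val with hK
  have hKn : K < n := by omega
  -- the two linear maps whose ranges are the relevant subspaces
  set pW : Fin n → Prop := fun i => i.val ≤ K with hpW
  set pV : Fin m → Prop := fun i => k.val ≤ i.val with hpV
  set mapW : ({i : Fin n // pW i} → ℝ) →ₗ[ℝ] (Fin n → ℝ) :=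
    (Matrix.mulVecLin U).comp (extSub pW) with hmapW
  set mapV : ({i : Fin m // pV i} → ℝ) →ₗ[ℝ] (Fin n → ℝ) :=
    ((extInj f hfi).comp ((Matrix.mulVecLin V).comp (extSub pV))) with hmapV
  have hWinj : Function.Injective mapW := by
    intro a b h
    exact extSub_inj pW (mulVec_injective_of_t U hUt h)
  have hVinj : Function.Injective mapV := by
    intro a b h
    exact extSub_inj pV (mulVec_injective_of_t V hVt (extInj_inj f hfi h))
  have hrW : Module.finrank ℝ (LinearMap.range mapW) = K + 1 := by
    rw [LinearMap.finrank_range_of_inj hWinj, Module.finrank_fintype_fun_eq_card,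
      card_le_subtype n K hKn]
  have hrV : Module.finrank ℝ (LinearMap.range mapV) = m - k.val := by
    rw [LinearMap.finrank_range_of_inj hVinj, Module.finrank_fintype_fun_eq_card,
      card_ge_subtype m k.val hk]
  -- intersection is nontrivial
  have hsum := Submodule.finrank_sup_add_finrank_inf_eq
    (LinearMap.range mapV) (LinearMap.range mapW)
  have hle : Module.finrank ℝ ↥(LinearMap.range mapV ⊔ LinearMap.range mapW) ≤ n := by
    have := Submodule.finrank_le (LinearMap.range mapV ⊔ LinearMap.range mapW)
    rwa [Module.finrank_fintype_fun_eq_card, Fintype.card_fin] at this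
  have hpos : 0 < Module.finrank ℝ ↥(LinearMap.range mapV ⊓ LinearMap.range mapW) := by
    omega
  have hne : LinearMap.range mapV ⊓ LinearMap.range mapW ≠ ⊥ := by
    intro h
    rw [h, finrank_bot] at hpos
    omega
  obtain ⟨x, hxmem, hx0⟩ := Submodule.ne_bot_iff _ |>.mp hne
  obtain ⟨d, hd⟩ := hxmem.1
  obtain ⟨c, hc⟩ := hxmem.2
  set c₀ : Fin n → ℝ := extSub pW c with hc₀
  set d₀ : Fin m → ℝ := extSub pV d with hd₀
  set y : Fin m → ℝ := V.mulVec d₀ with hy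
  have hxc : x = U.mulVec c₀ := by
    rw [← hc]; rfl
  have hxy : x = extInj f hfi y := by
    rw [← hd]; rfl
  -- quadratic forms
  obtain ⟨hq1, hq2⟩ := aux_quad U hUt lam c₀
  rw [← hxc] at hq1 hq2
  rw [← hAeq] at hq1
  obtain ⟨hq3, hq4⟩ := aux_quad V hVt mu d₀
  rw [← hy] at hq3 hq4
  rw [← hBeq] at hq3
  obtain ⟨hl1, hl2⟩ := extInj_quad f hfi A y
  rw [← hxy] at hl1 hl2
  -- positivity of ‖x‖²
  have hxx : 0 < x ⬝ᵥ x := by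
    rcases lt_or_eq_of_le (Finset.sum_nonneg fun i _ => mul_self_nonneg (x i) :
      (0 : ℝ) ≤ x ⬝ᵥ x) with h | h
    · exact h
    · exact absurd (dotProduct_self_eq_zero.mp h.symm) hx0
  -- upper bound
  have hub : x ⬝ᵥ A.mulVec x ≤ lam ⟨K, hKn⟩ * (x ⬝ᵥ x) := by
    rw [hq1, hq2, Finset.mul_sum]
    refine Finset.sum_le_sum fun i _ => ?_
    by_cases h : pW i
    · exact mul_le_mul_of_nonneg_right (hlam (by exact h : i ≤ (⟨K, hKn⟩ : Fin n)))
        (sq_nonneg _)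
    · have : c₀ i = 0 := by simp only [hc₀, extSub, LinearMap.coe_mk, AddHom.coe_mk, dif_neg h]
      rw [this]
      simp
  -- lower bound
  have hlb : mu k * (x ⬝ᵥ x) ≤ x ⬝ᵥ A.mulVec x := by
    rw [hl1, hl2, hq3, hq4, Finset.mul_sum]
    refine Finset.sum_le_sum fun i _ => ?_
    by_cases h : pV i
    · exact mul_le_mul_of_nonneg_right (hmu (by exact h : k ≤ i)) (sq_nonneg _)
    · have : d₀ i = 0 := by simp only [hd₀, extSub, LinearMap.coe_mk, AddHom.coe_mk, dif_neg h]
      rw [this]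
      simp
  have := hlb.trans hub
  exact le_of_mul_le_mul_right this hxx
end

section
/- Let A be a real symmetric n×n matrix and B the principal (n-1)×(n-1) submatrix obtained by deleting one row and the corresponding column. If λ_1 ≤ ... ≤ λ_n are the eigenvalues of A and μ_1 ≤ ... ≤ μ_{n-1} those of B, then λ_k ≤ μ_k ≤ λ_{k+1} for all 1 ≤ k ≤ n-1. -/
open Matrix Finset

namespace CauchyAux

variable {m : ℕ}

lemma single_inj : Function.Injective (fun j : Fin m => Pi.single j (1:ℝ)) := by
  intro a b hab
  by_contra h
  have := congrFun hab a
  simp [Pi.single_apply, h] at this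

/-- The coordinate subspace of vectors supported on `J`. -/
def coordSub (J : Finset (Fin m)) : Submodule ℝ (Fin m → ℝ) where
  carrier := {x | ∀ j ∉ J, x j = 0}
  add_mem' := fun hx hy j hj => by simp [hx j hj, hy j hj]
  zero_mem' := fun j hj => rfl
  smul_mem' := fun c x hx j hj => by simp [hx j hj]

lemma mem_coordSub {J : Finset (Fin m)} {x : Fin m → ℝ} :
    x ∈ coordSub J ↔ ∀ j ∉ J, x j = 0 := Iff.rfl

lemma coordSub_eq_span (J : Finset (Fin m)) :
    coordSub J = Submodule.span ℝ (J.image (fun j => Pi.single j (1:ℝ))) := by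
  apply le_antisymm
  · intro x hx
    have : x = ∑ j ∈ J, x j • (Pi.single j (1:ℝ) : Fin m → ℝ) := by
      funext p
      by_cases hp : p ∈ J
      · simp [Finset.sum_apply, Pi.single_apply, Finset.sum_ite_eq', hp]
      · simp [Finset.sum_apply, Pi.single_apply, Finset.sum_ite_eq', hp, hx p hp]
    rw [this]
    exact Submodule.sum_mem _ fun j hj => Submodule.smul_mem _ _
      (Submodule.subset_span (Finset.mem_coe.mpr (Finset.mem_image_of_mem _ hj)))
  · rw [Submodule.span_le]
    intro y hy
    simp only [Finset.coe_image, Set.mem_image, Finset.mem_coe] at hy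
    obtain ⟨j, hj, rfl⟩ := hy
    intro p hp
    have : j ≠ p := fun h => hp (h ▸ hj)
    simp [Pi.single_apply, this]

lemma finrank_coordSub (J : Finset (Fin m)) :
    Module.finrank ℝ (coordSub J) = J.card := by
  classical
  rw [coordSub_eq_span]
  have h2 : LinearIndependent ℝ (fun j : Fin m => Pi.single j (1:ℝ)) := by
    have := (Pi.basisFun ℝ (Fin m)).linearIndependent
    rwa [show ⇑(Pi.basisFun ℝ (Fin m)) = fun j : Fin m => Pi.single j (1:ℝ) from
      funext fun j => Pi.basisFun_apply ℝ (Fin m) j] at this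
  have hli : LinearIndependent ℝ
      ((↑) : (J.image (fun j => Pi.single j (1:ℝ)) : Set (Fin m → ℝ)) → (Fin m → ℝ)) := by
    apply h2.linearIndepOn_id.mono
    rw [Finset.coe_image]
    exact Set.image_subset_range _ _
  rw [finrank_span_finset_eq_card hli, Finset.card_image_of_injective _ single_inj]

/-- `mulVec` by an orthogonal matrix, as a linear equivalence. -/
noncomputable def mulVecEquiv (U : Matrix (Fin m) (Fin m) ℝ) (hU : U * Uᵀ = 1) :
    (Fin m → ℝ) ≃ₗ[ℝ] (Fin m → ℝ) :=
  LinearEquiv.ofLinear U.mulVecLin Uᵀ.mulVecLin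
    (by rw [← Matrix.mulVecLin_mul, hU, Matrix.mulVecLin_one])
    (by rw [← Matrix.mulVecLin_mul, mul_eq_one_comm.mp hU, Matrix.mulVecLin_one])

lemma mulVecEquiv_apply (U : Matrix (Fin m) (Fin m) ℝ) (hU : U * Uᵀ = 1) (c : Fin m → ℝ) :
    mulVecEquiv U hU c = U *ᵥ c := rfl

lemma dot_self_eq (U : Matrix (Fin m) (Fin m) ℝ) (hU : U * Uᵀ = 1) (c : Fin m → ℝ) :
    (U *ᵥ c) ⬝ᵥ (U *ᵥ c) = ∑ j, c j ^ 2 := by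
  have hU' : Uᵀ * U = 1 := mul_eq_one_comm.mp hU
  rw [Matrix.dotProduct_mulVec, ← Matrix.mulVec_transpose, Matrix.mulVec_mulVec, hU',
    Matrix.one_mulVec]
  simp [dotProduct, sq]

lemma dot_A_eq (U : Matrix (Fin m) (Fin m) ℝ) (hU : U * Uᵀ = 1) (lam : Fin m → ℝ)
    (c : Fin m → ℝ) :
    (U *ᵥ c) ⬝ᵥ ((U * Matrix.diagonal lam * Uᵀ) *ᵥ (U *ᵥ c)) = ∑ j, lam j * c j ^ 2 := by
  have hU' : Uᵀ * U = 1 := mul_eq_one_comm.mp hU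
  have h1 : (U * Matrix.diagonal lam * Uᵀ) *ᵥ (U *ᵥ c)
      = U *ᵥ (Matrix.diagonal lam *ᵥ c) := by
    rw [Matrix.mulVec_mulVec, Matrix.mul_assoc, Matrix.mul_assoc, hU', Matrix.mul_one,
      ← Matrix.mulVec_mulVec]
  rw [h1, Matrix.dotProduct_mulVec, ← Matrix.mulVec_transpose, Matrix.mulVec_mulVec, hU',
    Matrix.one_mulVec]
  simp only [dotProduct, Matrix.mulVec_diagonal]
  exact Finset.sum_congr rfl fun j _ => by ring

lemma sum_le_of_supported (J : Finset (Fin m)) (lam : Fin m → ℝ) (c : Fin m → ℝ)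
    (hc : ∀ j ∉ J, c j = 0) (t : ℝ) (ht : ∀ j ∈ J, lam j ≤ t) :
    ∑ j, lam j * c j ^ 2 ≤ t * ∑ j, c j ^ 2 := by
  rw [Finset.mul_sum]
  apply Finset.sum_le_sum
  intro j _
  by_cases hj : j ∈ J
  · exact mul_le_mul_of_nonneg_right (ht j hj) (sq_nonneg _)
  · simp [hc j hj]

lemma le_sum_of_supported (J : Finset (Fin m)) (lam : Fin m → ℝ) (c : Fin m → ℝ)
    (hc : ∀ j ∉ J, c j = 0) (t : ℝ) (ht : ∀ j ∈ J, t ≤ lam j) :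
    t * ∑ j, c j ^ 2 ≤ ∑ j, lam j * c j ^ 2 := by
  rw [Finset.mul_sum]
  apply Finset.sum_le_sum
  intro j _
  by_cases hj : j ∈ J
  · exact mul_le_mul_of_nonneg_right (ht j hj) (sq_nonneg _)
  · simp [hc j hj]

/-- Extension by zero at position `i`, as a linear map. -/
def insLin (i : Fin (m + 1)) : (Fin m → ℝ) →ₗ[ℝ] (Fin (m + 1) → ℝ) where
  toFun y := i.insertNth 0 y
  map_add' y z := by
    funext p
    refine Fin.succAboveCases i ?_ ?_ p <;> simp
  map_smul' a y := by
    funext p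
    refine Fin.succAboveCases i ?_ ?_ p <;> simp

lemma insLin_inj (i : Fin (m + 1)) : Function.Injective (insLin (m := m) i) := by
  intro y z h
  funext q
  have := congrFun h (i.succAbove q)
  simpa [insLin] using this

lemma insLin_dot (A : Matrix (Fin (m + 1)) (Fin (m + 1)) ℝ) (i : Fin (m + 1))
    (y : Fin m → ℝ) :
    (insLin i y) ⬝ᵥ (A *ᵥ insLin i y) =
      y ⬝ᵥ ((A.submatrix i.succAbove i.succAbove) *ᵥ y) := by
  simp only [insLin, LinearMap.coe_mk, AddHom.coe_mk, dotProduct, Matrix.mulVec,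
    Fin.sum_univ_succAbove _ i, Fin.insertNth_apply_same, Fin.insertNth_apply_succAbove,
    Matrix.submatrix_apply, dotProduct, zero_mul, mul_zero, zero_add, add_zero]

lemma insLin_dot_self (i : Fin (m + 1)) (y : Fin m → ℝ) :
    (insLin i y) ⬝ᵥ (insLin i y) = y ⬝ᵥ y := by
  simp only [insLin, LinearMap.coe_mk, AddHom.coe_mk, dotProduct,
    Fin.sum_univ_succAbove _ i, Fin.insertNth_apply_same, Fin.insertNth_apply_succAbove,
    zero_mul, zero_add]

end CauchyAux

open CauchyAux

/-- Cauchy interlacing theorem: if `B` is obtained from the real symmetric matrix `A` by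
deleting the `i`-th row and column, then the ordered eigenvalues satisfy
`λ_k ≤ μ_k ≤ λ_{k+1}`. -/
theorem cauchy_interlacing (n : ℕ)
    (A : Matrix (Fin (n + 1)) (Fin (n + 1)) ℝ) (hA : A.IsSymm) (i : Fin (n + 1))
    (lam : Fin (n + 1) → ℝ) (mu : Fin n → ℝ)
    (hlam : Monotone lam) (hmu : Monotone mu)
    (hAdiag : IsOrthoDiag A lam)
    (hBdiag : IsOrthoDiag (A.submatrix i.succAbove i.succAbove) mu) :
    ∀ k : Fin n, lam k.castSucc ≤ mu k ∧ mu k ≤ lam k.succ := by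
  classical
  obtain ⟨U, hU, hAU⟩ := hAdiag
  obtain ⟨V, hV, hBV⟩ := hBdiag
  set B := A.submatrix i.succAbove i.succAbove with hB
  intro k
  have key : ∀ (JA : Finset (Fin (n + 1))) (JB : Finset (Fin n)),
      n + 1 < JA.card + JB.card →
      ∃ c : Fin (n + 1) → ℝ, ∃ d : Fin n → ℝ,
        U *ᵥ c = insLin i (V *ᵥ d) ∧ (∀ j ∉ JA, c j = 0) ∧ (∀ j ∉ JB, d j = 0) ∧
        c ≠ 0 := by
    intro JA JB hcard
    set fB : (Fin n → ℝ) →ₗ[ℝ] (Fin (n + 1) → ℝ) :=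
      (insLin i).comp (mulVecEquiv V hV).toLinearMap with hfB
    have hfBinj : Function.Injective fB :=
      (insLin_inj i).comp (mulVecEquiv V hV).injective
    set SA : Submodule ℝ (Fin (n + 1) → ℝ) :=
      Submodule.map (mulVecEquiv U hU).toLinearMap (coordSub JA) with hSA
    set SB : Submodule ℝ (Fin (n + 1) → ℝ) := Submodule.map fB (coordSub JB) with hSB
    have hrA : Module.finrank ℝ SA = JA.card := by
      rw [hSA, LinearEquiv.finrank_map_eq, finrank_coordSub]
    have hrB : Module.finrank ℝ SB = JB.card := by
      rw [hSB, ← LinearEquiv.finrank_eq (Submodule.equivMapOfInjective _ hfBinj (coordSub JB)),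
        finrank_coordSub]
    have hinf : SA ⊓ SB ≠ ⊥ := by
      intro hbot
      have heq := Submodule.finrank_sup_add_finrank_inf_eq SA SB
      rw [hbot] at heq
      simp only [finrank_bot, add_zero] at heq
      have hle : Module.finrank ℝ ↥(SA ⊔ SB) ≤ n + 1 := by
        have := Submodule.finrank_le (SA ⊔ SB)
        simpa [Module.finrank_pi] using this
      rw [hrA, hrB] at heq
      omega
    obtain ⟨x, hx, hx0⟩ := Submodule.exists_mem_ne_zero_of_ne_bot hinf
    obtain ⟨hxA, hxB⟩ := hx
    obtain ⟨c, hc, hcx⟩ := hxA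
    obtain ⟨d, hd, hdx⟩ := hxB
    refine ⟨c, d, ?_, hc, hd, ?_⟩
    · show U *ᵥ c = insLin i (V *ᵥ d)
      have h1 : U *ᵥ c = x := hcx
      have h2 : insLin i (V *ᵥ d) = x := hdx
      rw [h1, h2]
    · intro h
      apply hx0
      rw [← hcx, show (mulVecEquiv U hU).toLinearMap c = U *ᵥ c from rfl, h,
        Matrix.mulVec_zero]
  have main : ∀ (JA : Finset (Fin (n + 1))) (JB : Finset (Fin n)),
      n + 1 < JA.card + JB.card →
      ∃ c : Fin (n + 1) → ℝ, ∃ d : Fin n → ℝ,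
        (∀ j ∉ JA, c j = 0) ∧ (∀ j ∉ JB, d j = 0) ∧
        (∑ j, lam j * c j ^ 2 = ∑ j, mu j * d j ^ 2) ∧
        (∑ j, c j ^ 2 = ∑ j, d j ^ 2) ∧ 0 < ∑ j, c j ^ 2 := by
    intro JA JB hcard
    obtain ⟨c, d, hcd, hc, hd, hc0⟩ := key JA JB hcard
    refine ⟨c, d, hc, hd, ?_, ?_, ?_⟩
    · have h1 := dot_A_eq U hU lam c
      rw [← hAU, hcd, insLin_dot A i (V *ᵥ d), ← hB, hBV, dot_A_eq V hV mu d] at h1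
      exact h1.symm
    · have h2 := dot_self_eq U hU c
      rw [hcd, insLin_dot_self, dot_self_eq V hV d] at h2
      exact h2.symm
    · apply Finset.sum_pos' (fun j _ => sq_nonneg (c j))
      obtain ⟨j, hj⟩ := Function.ne_iff.mp hc0
      exact ⟨j, Finset.mem_univ j, sq_pos_of_ne_zero hj⟩
  constructor
  · -- lam k.castSucc ≤ mu k
    obtain ⟨c, d, hc, hd, hsum, hnorm, hpos⟩ :=
      main (Finset.Ici k.castSucc) (Finset.Iic k) (by
        rw [Fin.card_Ici, Fin.card_Iic]
        simp only [Fin.coe_castSucc]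
        omega)
    have h1 : lam k.castSucc * ∑ j, c j ^ 2 ≤ ∑ j, lam j * c j ^ 2 :=
      le_sum_of_supported _ lam c hc _ (fun j hj => hlam (Finset.mem_Ici.mp hj))
    have h2 : ∑ j, mu j * d j ^ 2 ≤ mu k * ∑ j, d j ^ 2 :=
      sum_le_of_supported _ mu d hd _ (fun j hj => hmu (Finset.mem_Iic.mp hj))
    rw [← hnorm] at h2
    rw [hsum] at h1
    have := h1.trans h2
    exact le_of_mul_le_mul_right this hpos
  · -- mu k ≤ lam k.succ
    obtain ⟨c, d, hc, hd, hsum, hnorm, hpos⟩ :=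
      main (Finset.Iic k.succ) (Finset.Ici k) (by
        rw [Fin.card_Ici, Fin.card_Iic]
        simp only [Fin.val_succ]
        omega)
    have h1 : ∑ j, lam j * c j ^ 2 ≤ lam k.succ * ∑ j, c j ^ 2 :=
      sum_le_of_supported _ lam c hc _ (fun j hj => hlam (Finset.mem_Iic.mp hj))
    have h2 : mu k * ∑ j, d j ^ 2 ≤ ∑ j, mu j * d j ^ 2 :=
      le_sum_of_supported _ mu d hd _ (fun j hj => hmu (Finset.mem_Ici.mp hj))
    rw [← hnorm] at h2
    rw [← hsum] at h2
    have := h2.trans h1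
    exact le_of_mul_le_mul_right this hpos
end

section
/- Let D be a real symmetric n×n matrix that is off-diagonal with respect to a splitting R^n = V_even ⊕ V_odd (i.e., D maps V_even into V_odd and vice versa). Then for every k ≥ 1, the supertrace str(L^k) = tr(P L^k) vanishes, where L = D² and P is the grading operator equal to +1 on V_even and -1 on V_odd. -/
open Matrix

/-- McKean–Singer: if a real symmetric matrix `D` anticommutes with a symmetric grading
involution `P` (so `D` is off-diagonal with respect to the even/odd splitting given by the
`±1` eigenspaces of `P`), then the supertrace `str(L^k) = tr(P L^k)` vanishes for all
`k ≥ 1`, where `L = D²`. -/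
theorem mckean_singer_supertrace (n : ℕ) (D P : Matrix (Fin n) (Fin n) ℝ)
    (hD : D.IsSymm) (hP : P.IsSymm) (hP2 : P * P = 1) (hanti : P * D = -(D * P))
    (L : Matrix (Fin n) (Fin n) ℝ) (hL : L = D * D) :
    ∀ k : ℕ, 1 ≤ k → (P * L ^ k).trace = 0 := by
  intro k hk
  obtain ⟨m, rfl⟩ := Nat.exists_eq_add_of_le hk
  have hLk : L ^ (1 + m) = D * (D * L ^ m) := by
    rw [pow_add, pow_one, hL, mul_assoc]
  have key : (P * L ^ (1 + m)).trace = -(P * L ^ (1 + m)).trace := by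
    calc (P * L ^ (1 + m)).trace
        = (P * D * (D * L ^ m)).trace := by rw [hLk, mul_assoc]
      _ = (-(D * P) * (D * L ^ m)).trace := by rw [hanti]
      _ = -((D * (P * (D * L ^ m)))).trace := by
          rw [neg_mul, trace_neg, mul_assoc]
      _ = -((P * (D * L ^ m) * D)).trace := by rw [trace_mul_comm]
      _ = -(P * L ^ (1 + m)).trace := by
          have hc : L ^ m * D = D * L ^ m := by
            rw [hL]
            exact (((Commute.refl D).mul_left (Commute.refl D)).pow_left m).eq
          rw [hLk, mul_assoc, mul_assoc, hc]
  linarith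
end

section
/- Let D be a real symmetric n×n matrix anticommuting with a grading involution P (P² = I, P symmetric, PD = -DP), and let L = D². Then str(exp(-t L)) = tr(P exp(-tL)) is independent of t, and equals both tr(P) (at t = 0) and the supertrace of the projection onto the kernel of L (as t → ∞), i.e. tr(P) = dim(ker L ∩ V_even) - dim(ker L ∩ V_odd). -/
open Matrix

set_option maxHeartbeats 1000000 in
/-- McKean–Singer / Euler–Poincaré via heat flow: if the real symmetric matrix `D`
anticommutes with the symmetric grading involution `P` and `L = D²`, then the supertrace
`str(exp(-tL)) = tr(P exp(-tL))` is independent of `t`, equals `tr(P)` (its value at `t = 0`),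
and equals the supertrace of the projection onto `ker L`, i.e.
`tr(P) = dim(ker L ∩ V_even) - dim(ker L ∩ V_odd)`. -/
theorem mckean_singer_heat (n : ℕ) (D P : Matrix (Fin n) (Fin n) ℝ)
    (hD : D.IsSymm) (hP : P.IsSymm) (hP2 : P * P = 1) (hanti : P * D = -(D * P))
    (L : Matrix (Fin n) (Fin n) ℝ) (hL : L = D * D) :
    (∀ t : ℝ, (P * NormedSpace.exp (-(t • L))).trace = P.trace) ∧
      (P.trace : ℝ) =
        (Module.finrank ℝ
            ↥(LinearMap.ker L.mulVecLin ⊓ Module.End.eigenspace P.mulVecLin 1) : ℤ) -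
          (Module.finrank ℝ
            ↥(LinearMap.ker L.mulVecLin ⊓ Module.End.eigenspace P.mulVecLin (-1)) : ℤ) := by
  -- trace of P times an even power of D vanishes
  have hzero : ∀ k : ℕ, 1 ≤ k → (P * (D * D) ^ k).trace = 0 := by
    intro k hk
    obtain ⟨m, rfl⟩ : ∃ m, k = m + 1 := ⟨k - 1, by omega⟩
    have hpow : (D * D) ^ (m + 1) = D ^ (2 * m + 2) := by
      rw [← pow_two, ← pow_mul]; ring_nf
    rw [hpow]
    have e1 : D ^ (2*m+2) = D * D^(2*m+1) := by rw [← pow_succ']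
    have key : (P * D^(2*m+2)).trace = -(P * D^(2*m+2)).trace := by
      calc (P * D^(2*m+2)).trace
          = ((P*D) * D^(2*m+1)).trace := by rw [e1, mul_assoc]
        _ = -((D * (P * D^(2*m+1)))).trace := by
            rw [hanti]; simp [mul_assoc]
        _ = -(((P * D^(2*m+1)) * D)).trace := by rw [Matrix.trace_mul_comm]
        _ = -(P * D^(2*m+2)).trace := by rw [mul_assoc, ← pow_succ]
    linarith
  constructor
  · -- Part 1: the supertrace of the heat kernel is constant
    intro t
    letI : SeminormedRing (Matrix (Fin n) (Fin n) ℝ) := Matrix.linftyOpSemiNormedRing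
    letI : NormedRing (Matrix (Fin n) (Fin n) ℝ) := Matrix.linftyOpNormedRing
    letI : NormedAlgebra ℝ (Matrix (Fin n) (Fin n) ℝ) := Matrix.linftyOpNormedAlgebra
    have hsum : Summable (fun k : ℕ => ((Nat.factorial k : ℝ))⁻¹ • (-(t • L))^k) :=
      NormedSpace.expSeries_summable' _
    rw [NormedSpace.exp_eq_tsum ℝ]
    let f : Matrix (Fin n) (Fin n) ℝ →ₗ[ℝ] ℝ :=
      { toFun := fun A => (P * A).trace
        map_add' := by intro x y; simp [mul_add]
        map_smul' := by intro c x; simp [Matrix.mul_smul] }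
    have hmap := hsum.hasSum.mapL f.toContinuousLinearMap
    have hfun : (fun k : ℕ => f.toContinuousLinearMap (((Nat.factorial k : ℝ))⁻¹ • (-(t • L))^k))
        = fun k : ℕ => if k = 0 then P.trace else 0 := by
      funext k
      cases k with
      | zero => simp [f]
      | succ m =>
        have h1 : (-(t • L))^(m+1) = (-t)^(m+1) • L^(m+1) := by
          rw [← neg_smul, smul_pow]
        simp only [LinearMap.coe_toContinuousLinearMap', f, LinearMap.coe_mk, AddHom.coe_mk,
          h1, Matrix.mul_smul, Matrix.trace_smul]
        rw [hL, hzero (m+1) (by omega)]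
        simp
    rw [hfun] at hmap
    have hts := hmap.tsum_eq
    rw [tsum_eq_single 0 (by intro b hb; simp [hb])] at hts
    simpa [f] using hts.symm
  · -- Part 2
    set d := D.mulVecLin with hd
    set p := P.mulVecLin with hp
    clear_value d p
    have hdp : ∀ v, d (p v) = -(p (d v)) := by
      intro v
      have h1 : D * P = -(P * D) := by rw [hanti, neg_neg]
      calc d (p v) = ((D * P).mulVecLin) v := by simp [hd, hp, Matrix.mulVecLin_mul]
        _ = -(((P * D).mulVecLin) v) := by
            rw [h1, Matrix.mulVecLin_apply, Matrix.mulVecLin_apply, Matrix.neg_mulVec]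
        _ = -(p (d v)) := by simp [hd, hp, Matrix.mulVecLin_mul]
    have hDsym : ∀ v w : Fin n → ℝ, d v ⬝ᵥ w = v ⬝ᵥ d w := by
      intro v w
      rw [hd, Matrix.mulVecLin_apply, Matrix.mulVecLin_apply, Matrix.dotProduct_mulVec,
        ← Matrix.mulVec_transpose, hD.eq, dotProduct_comm, Matrix.dotProduct_mulVec,
        ← Matrix.mulVec_transpose, hD.eq, dotProduct_comm]
    have hker : LinearMap.ker L.mulVecLin = LinearMap.ker d := by
      apply le_antisymm
      · intro v hv
        rw [LinearMap.mem_ker] at hv ⊢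
        have hv' : d (d v) = 0 := by
          rw [hL] at hv; rw [hd]
          simpa [Matrix.mulVecLin_mul] using hv
        have : d v ⬝ᵥ d v = 0 := by rw [hDsym, hv', dotProduct_zero]
        exact dotProduct_self_eq_zero.mp this
      · intro v hv
        rw [LinearMap.mem_ker] at hv ⊢
        rw [hL, Matrix.mulVecLin_mul]
        simp [hv, ← hd]
    have hpp : ∀ v, p (p v) = v := by
      intro v
      calc p (p v) = ((P * P).mulVecLin) v := by simp [hp, Matrix.mulVecLin_mul]
        _ = v := by rw [hP2]; simp
    set K := LinearMap.ker d with hK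
    set W := LinearMap.range d with hW
    -- disjointness of K and W
    have hdisj : Disjoint K W := by
      rw [Submodule.disjoint_def]
      intro v hvK hvW
      obtain ⟨u, hu⟩ := hvW
      have h0 : d v = 0 := hvK
      have : v ⬝ᵥ v = 0 := by
        calc v ⬝ᵥ v = d u ⬝ᵥ v := by rw [hu]
          _ = u ⬝ᵥ d v := hDsym u v
          _ = 0 := by rw [h0, dotProduct_zero]
      exact dotProduct_self_eq_zero.mp this
    have hcompl : IsCompl K W := by
      refine ⟨hdisj, ?_⟩
      rw [codisjoint_iff]
      apply Submodule.eq_top_of_finrank_eq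
      have h1 := Submodule.finrank_sup_add_finrank_inf_eq K W
      have h2 : K ⊓ W = ⊥ := hdisj.eq_bot
      have h3 := LinearMap.finrank_range_add_finrank_ker d
      rw [h2, finrank_bot, add_zero] at h1
      rw [h1, ← h3, ← hK, ← hW]; ring
    -- K is p-invariant
    have hKp : ∀ v ∈ K, p v ∈ K := by
      intro v hv
      have h0 : d v = 0 := hv
      have : d (p v) = 0 := by rw [hdp, h0, map_zero, neg_zero]
      exact this
    -- the three submodules
    set N : Fin 3 → Submodule ℝ (Fin n → ℝ) :=
      ![K ⊓ Module.End.eigenspace p 1, K ⊓ Module.End.eigenspace p (-1), W] with hN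
    have hmem1 : ∀ v, v ∈ Module.End.eigenspace p 1 ↔ p v = v := by
      intro v; rw [Module.End.mem_eigenspace_iff, one_smul]
    have hmem2 : ∀ v, v ∈ Module.End.eigenspace p (-1) ↔ p v = -v := by
      intro v; rw [Module.End.mem_eigenspace_iff, neg_one_smul]
    -- supremum is everything
    have hsup : ⨆ i, N i = ⊤ := by
      rw [eq_top_iff]
      intro v _
      have hv : v ∈ K ⊔ W := by rw [hcompl.sup_eq_top]; trivial
      obtain ⟨k, hk, w, hw, rfl⟩ := Submodule.mem_sup.mp hv
      have ha : (2 : ℝ)⁻¹ • (k + p k) ∈ N 0 := by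
        refine Submodule.smul_mem _ _ (Submodule.mem_inf.mpr ⟨?_, ?_⟩)
        · exact Submodule.add_mem _ hk (hKp k hk)
        · rw [hmem1]; simp [map_add, hpp]; rw [add_comm]
      have hb : (2 : ℝ)⁻¹ • (k - p k) ∈ N 1 := by
        refine Submodule.smul_mem _ _ (Submodule.mem_inf.mpr ⟨?_, ?_⟩)
        · exact Submodule.sub_mem _ hk (hKp k hk)
        · rw [hmem2]; simp [map_sub, hpp]
      have hdecomp : k + w = (2 : ℝ)⁻¹ • (k + p k) + (2 : ℝ)⁻¹ • (k - p k) + w := by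
        rw [smul_add, smul_sub]; module
      rw [hdecomp]
      refine Submodule.add_mem _ (Submodule.add_mem _ ?_ ?_) ?_
      · exact Submodule.mem_iSup_of_mem 0 ha
      · exact Submodule.mem_iSup_of_mem 1 hb
      · exact Submodule.mem_iSup_of_mem 2 hw
    -- independence
    have hind : iSupIndep N := by
      intro i
      fin_cases i
      · have hle : (⨆ j, ⨆ (_ : j ≠ (0 : Fin 3)), N j) ≤ N 1 ⊔ N 2 := by
          refine iSup_le fun j => iSup_le fun hj => ?_
          fin_cases j
          · exact absurd rfl hj
          · exact le_sup_left
          · exact le_sup_right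
        refine Disjoint.mono_right hle ?_
        rw [Submodule.disjoint_def]
        intro v hv0 hv12
        obtain ⟨b, hb, w, hw, rfl⟩ := Submodule.mem_sup.mp hv12
        have hbw : b + w ∈ K := (Submodule.mem_inf.mp hv0).1
        have hwK : w ∈ K := by
          have := Submodule.sub_mem _ hbw (Submodule.mem_inf.mp hb).1
          simpa using this
        have hw0 : w = 0 := (Submodule.disjoint_def.mp hdisj) w hwK hw
        subst hw0
        rw [add_zero] at hv0 ⊢
        have h1 : p b = b := (hmem1 b).mp (Submodule.mem_inf.mp hv0).2
        have h2 : p b = -b := (hmem2 b).mp (Submodule.mem_inf.mp hb).2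
        have : b + b = 0 := by nth_rewrite 1 [← h1]; rw [h2]; abel
        have : (2 : ℝ) • b = 0 := by rw [two_smul]; exact this
        simpa using (smul_eq_zero.mp this).resolve_left (by norm_num)
      · have hle : (⨆ j, ⨆ (_ : j ≠ (1 : Fin 3)), N j) ≤ N 0 ⊔ N 2 := by
          refine iSup_le fun j => iSup_le fun hj => ?_
          fin_cases j
          · exact le_sup_left
          · exact absurd rfl hj
          · exact le_sup_right
        refine Disjoint.mono_right hle ?_
        rw [Submodule.disjoint_def]
        intro v hv0 hv12
        obtain ⟨b, hb, w, hw, rfl⟩ := Submodule.mem_sup.mp hv12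
        have hbw : b + w ∈ K := (Submodule.mem_inf.mp hv0).1
        have hwK : w ∈ K := by
          have := Submodule.sub_mem _ hbw (Submodule.mem_inf.mp hb).1
          simpa using this
        have hw0 : w = 0 := (Submodule.disjoint_def.mp hdisj) w hwK hw
        subst hw0
        rw [add_zero] at hv0 ⊢
        have h1 : p b = -b := (hmem2 b).mp (Submodule.mem_inf.mp hv0).2
        have h2 : p b = b := (hmem1 b).mp (Submodule.mem_inf.mp hb).2
        have : b + b = 0 := by nth_rewrite 1 [← h2]; rw [h1]; abel
        have : (2 : ℝ) • b = 0 := by rw [two_smul]; exact this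
        simpa using (smul_eq_zero.mp this).resolve_left (by norm_num)
      · have hle : (⨆ j, ⨆ (_ : j ≠ (2 : Fin 3)), N j) ≤ K := by
          refine iSup_le fun j => iSup_le fun hj => ?_
          fin_cases j
          · exact inf_le_left
          · exact inf_le_left
          · exact absurd rfl hj
        exact Disjoint.mono_right hle hdisj.symm
    have hInt : DirectSum.IsInternal N :=
      (DirectSum.isInternal_submodule_iff_iSupIndep_and_iSup_eq_top N).mpr ⟨hind, hsup⟩
    -- p maps each N i to itself
    have hf : ∀ i, Set.MapsTo p (N i) (N i) := by
      intro i
      fin_cases i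
      · intro v hv
        simp only [SetLike.mem_coe] at hv ⊢
        have h2 := (hmem1 v).mp (Submodule.mem_inf.mp hv).2
        show p v ∈ N 0
        rw [h2]; exact hv
      · intro v hv
        simp only [SetLike.mem_coe] at hv ⊢
        have h2 := (hmem2 v).mp (Submodule.mem_inf.mp hv).2
        show p v ∈ N 1
        rw [h2]; exact Submodule.neg_mem _ hv
      · intro v hv
        simp only [SetLike.mem_coe] at hv ⊢
        have hv' : v ∈ W := hv
        obtain ⟨u, rfl⟩ := hv'
        show p (d u) ∈ N 2
        have : p (d u) = -(d (p u)) := by rw [hdp u]; ring_nf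
        rw [this]
        exact Submodule.neg_mem _ ⟨p u, rfl⟩
    have htr := LinearMap.trace_eq_sum_trace_restrict hInt hf
    rw [Fin.sum_univ_three] at htr
    -- restriction to N 0 is the identity
    have h0 : p.restrict (hf 0) = LinearMap.id := by
      apply LinearMap.ext; intro v
      have h2 := (hmem1 v.1).mp (Submodule.mem_inf.mp v.2).2
      apply Subtype.ext
      exact h2
    have h1 : p.restrict (hf 1) = -LinearMap.id := by
      apply LinearMap.ext; intro v
      have h2 := (hmem2 v.1).mp (Submodule.mem_inf.mp v.2).2
      apply Subtype.ext
      exact h2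
    -- the W part
    have hdd : d ∘ₗ d = L.mulVecLin := by rw [hL, Matrix.mulVecLin_mul, hd]
    have hkerdd : LinearMap.ker (d ∘ₗ d) = K := by rw [hdd, hker]
    have hrange : LinearMap.range (d ∘ₗ d) = W := by
      apply Submodule.eq_of_le_of_finrank_eq
      · rw [hW]; exact LinearMap.range_comp_le_range d d
      · have h3 := LinearMap.finrank_range_add_finrank_ker d
        have h4 := LinearMap.finrank_range_add_finrank_ker (d ∘ₗ d)
        rw [hkerdd] at h4
        rw [← hK, ← hW] at h3
        omega
    have hdW : Set.MapsTo d (N 2) (N 2) := by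
      intro v hv
      simp only [SetLike.mem_coe] at hv ⊢
      have hv' : v ∈ W := hv
      obtain ⟨u, rfl⟩ := hv'
      show d (d u) ∈ N 2
      exact ⟨d u, rfl⟩
    set Dr := d.restrict hdW with hDr
    set Pr := p.restrict (hf 2) with hPr
    have hsurj : Function.Surjective Dr := by
      rintro ⟨w, hw⟩
      have hw' : w ∈ W := hw
      rw [← hrange] at hw'
      obtain ⟨u, hu⟩ := hw'
      refine ⟨⟨d u, ⟨u, rfl⟩⟩, Subtype.ext ?_⟩
      exact hu
    have hinj : Function.Injective Dr :=
      (LinearMap.injective_iff_surjective).mpr hsurj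
    set e : N 2 ≃ₗ[ℝ] N 2 := LinearEquiv.ofBijective Dr ⟨hinj, hsurj⟩ with he
    have hanti' : ∀ u : N 2, Dr (Pr u) = -(Pr (Dr u)) := by
      intro u
      apply Subtype.ext
      exact hdp u.1
    have hconj : e.conj Pr = -Pr := by
      apply LinearMap.ext; intro w
      have h1' : (e.conj Pr) w = Dr (Pr (e.symm w)) := by rw [LinearEquiv.conj_apply]; rfl
      have h2' : Dr (e.symm w) = w := e.apply_symm_apply w
      rw [LinearMap.neg_apply, h1', hanti' (e.symm w), h2']
    have htrW : LinearMap.trace ℝ _ Pr = 0 := by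
      have hc := LinearMap.trace_conj' Pr e
      rw [hconj] at hc
      rw [(LinearMap.trace ℝ _).map_neg Pr] at hc
      linarith
    -- assemble
    have hPtr : (P.trace : ℝ) = LinearMap.trace ℝ _ p := by
      rw [hp, ← Matrix.toLin'_apply', LinearMap.trace_eq_matrix_trace ℝ (Pi.basisFun ℝ (Fin n)),
        LinearMap.toMatrix_eq_toMatrix', LinearMap.toMatrix'_toLin']
    have htr0 : LinearMap.trace ℝ _ (p.restrict (hf 0)) = (Module.finrank ℝ (N 0) : ℝ) := by
      rw [h0, LinearMap.trace_id]
    have htr1 : LinearMap.trace ℝ _ (p.restrict (hf 1)) = -(Module.finrank ℝ (N 1) : ℝ) := by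
      rw [h1]
      have hneg := (LinearMap.trace ℝ ↥(N 1)).map_neg (LinearMap.id : ↥(N 1) →ₗ[ℝ] ↥(N 1))
      rw [hneg, LinearMap.trace_id]
    rw [hker, hPtr, htr, htr0, htr1, htrW]
    push_cast
    show (Module.finrank ℝ (N 0) : ℝ) + -(Module.finrank ℝ (N 1) : ℝ) + 0
      = (Module.finrank ℝ (N 0) : ℝ) - (Module.finrank ℝ (N 1) : ℝ)
    ring
end
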